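/- arXiv:2402.03779 — 5 statements merged into one kernel-verified Lean document; each statement's English description precedes it below -/
import Mathlib

section
/- Let ε ∈ (0,1) and assume the cumulative distribution function F_s of s(X) is continuous. Define the plug-in rule h*_ε by h*_ε(x) = g*(x) if F_s(s(x)) ≥ 1−ε and h*_ε(x) = ℜ otherwise, where g*(x) ∈ argmax_{k∈[K]} p_k(x). Then for every measurable classifier with reject option h : 𝒳 → [K] ∪ {ℜ} satisfying P(h(X) = ℜ) = 1−ε, one has P(h*_ε(X) ≠ Y, h*_ε(X) ≠ ℜ) ≤ P(h(X) ≠ Y, h(X) ≠ ℜ); that is, h*_ε minimizes the misclassification risk among all classifiers with rejection probability exactly 1−ε. -/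
/-!
Write `q = s(X)`. For any classifier `h` with reject option, summing the defining property of the
`p_k` over the labels gives `P(h(X) = Y) = ∑ₖ ∫_{h(X) = k} p_k(X) ≤ ∫_{h(X) ≠ ℜ} q`, with equality
for the plug-in rule, which predicts the Bayes label whenever it does not reject. Hence the risk of
`h` is at least `P(h(X) ≠ ℜ) - ∫_{h(X) ≠ ℜ} q`, with equality for `h*_ε`. Continuity of `F_s` makes
the acceptance event `{F_s(q) ≥ 1 - ε}` of `h*_ε` a threshold event `{q ≥ t}` of probability exactly
`ε`, and among all events of probability `ε` an upper level set of `q` maximises `∫ q`.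
-/

open MeasureTheory Set Filter Topology ProbabilityTheory

section Integral

variable {Ω : Type*} [MeasurableSpace Ω] {μ : Measure Ω}

lemma measure_eq_zero_of_setIntegral_nonpos {g : Ω → ℝ} {S : Set Ω} (hS : MeasurableSet S)
    (hg : IntegrableOn g S μ) (hpos : ∀ ω ∈ S, 0 < g ω) (hint : ∫ ω in S, g ω ∂μ ≤ 0) :
    μ S = 0 := by
  by_contra hS0
  have hsupp : Function.support g ∩ S = S := inter_eq_right.2 fun ω hω => (hpos ω hω).ne'
  have := (setIntegral_pos_iff_support_of_nonneg_ae
    (ae_restrict_of_forall_mem hS fun ω hω => (hpos ω hω).le) hg).2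
    (by rw [hsupp]; exact pos_iff_ne_zero.2 hS0)
  linarith

lemma measure_preimage_eq_zero_of_forall_Icc {f : Ω → ℝ} {B : Set ℝ}
    (h : ∀ n : ℕ, μ (f ⁻¹' (B ∩ Icc (-n) n)) = 0) : μ (f ⁻¹' B) = 0 := by
  refine measure_mono_null (fun ω hω => ?_) (measure_iUnion_null h)
  obtain ⟨n, hn⟩ := exists_nat_ge |f ω|
  exact mem_iUnion.2 ⟨n, hω, abs_le.1 hn⟩

/-- The hypothesis says that `f` is the conditional probability of `E` given `f`. As `f` is not
assumed integrable (the set integrals may be junk), it is only used on the bounded pieces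
`f ⁻¹' (B ∩ [-n, n])`. -/
lemma ae_mem_Icc_of_setIntegral_preimage_eq [IsFiniteMeasure μ] {f : Ω → ℝ} {E : Set Ω}
    (hf : Measurable f)
    (h : ∀ B, MeasurableSet B → ∫ ω in f ⁻¹' B, f ω ∂μ = μ.real (f ⁻¹' B ∩ E)) :
    ∀ᵐ ω ∂μ, f ω ∈ Icc 0 1 := by
  have hpiece : ∀ {B : Set ℝ} (n : ℕ), MeasurableSet B →
      MeasurableSet (f ⁻¹' (B ∩ Icc (-n) n)) ∧ IntegrableOn f (f ⁻¹' (B ∩ Icc (-n) n)) μ :=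
    fun n hB => ⟨hf (hB.inter measurableSet_Icc),
      Measure.integrableOn_of_bounded (measure_ne_top _ _) hf.aestronglyMeasurable
        (ae_restrict_of_forall_mem (hf (hB.inter measurableSet_Icc)) fun ω hω => abs_le.2 hω.2)⟩
  have hneg : μ (f ⁻¹' Iio 0) = 0 := measure_preimage_eq_zero_of_forall_Icc fun n => by
    obtain ⟨hS, hint⟩ := hpiece n measurableSet_Iio
    refine measure_eq_zero_of_setIntegral_nonpos (g := fun ω => -f ω) hS hint.neg
      (fun ω hω => neg_pos.2 hω.1) ?_
    rw [integral_neg, h _ (measurableSet_Iio.inter measurableSet_Icc), neg_nonpos]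
    exact measureReal_nonneg
  have hgt : μ (f ⁻¹' Ioi 1) = 0 := measure_preimage_eq_zero_of_forall_Icc fun n => by
    obtain ⟨hS, hint⟩ := hpiece n measurableSet_Ioi
    refine measure_eq_zero_of_setIntegral_nonpos (g := fun ω => f ω - 1) hS
      (hint.sub (integrableOn_const (measure_ne_top _ _))) (fun ω hω => sub_pos.2 hω.1) ?_
    rw [integral_sub hint (integrableOn_const (measure_ne_top _ _)), setIntegral_const,
      h _ (measurableSet_Ioi.inter measurableSet_Icc), smul_eq_mul, mul_one, sub_nonpos]
    exact measureReal_mono inter_subset_left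
  refine measure_mono_null (fun ω hω => ?_) (measure_union_null hneg hgt)
  by_cases h0 : f ω < 0
  · exact Or.inl h0
  · exact Or.inr (lt_of_not_ge fun h1 => hω ⟨not_lt.1 h0, h1⟩)

/-- Bathtub principle. -/
lemma setIntegral_le_setIntegral_of_measureReal_eq [IsFiniteMeasure μ] {f : Ω → ℝ}
    (hf : Integrable f μ) {A D : Set Ω} (hA : MeasurableSet A) (hD : MeasurableSet D) {t : ℝ}
    (hfD : ∀ ω ∈ D, t ≤ f ω) (hfDc : ∀ ω ∉ D, f ω ≤ t) (hAD : μ.real A = μ.real D) :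
    ∫ ω in A, f ω ∂μ ≤ ∫ ω in D, f ω ∂μ := by
  have hAD' : μ.real (A \ D) = μ.real (D \ A) := by
    have h1 := measureReal_inter_add_sdiff (μ := μ) (s := A) hD
    have h2 := measureReal_inter_add_sdiff (μ := μ) (s := D) hA
    rw [inter_comm] at h2
    linarith
  have hup : ∫ ω in A \ D, f ω ∂μ ≤ μ.real (A \ D) * t := by
    simpa [setIntegral_const] using setIntegral_mono_on hf.integrableOn (integrable_const t)
      (hA.diff hD) fun ω hω => hfDc ω hω.2
  have hlow : μ.real (D \ A) * t ≤ ∫ ω in D \ A, f ω ∂μ := by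
    simpa [setIntegral_const] using setIntegral_mono_on (integrable_const t) hf.integrableOn
      (hD.diff hA) fun ω hω => hfD ω hω.1
  have hsplitA := integral_inter_add_sdiff hD (hf.integrableOn (s := A))
  have hsplitD := integral_inter_add_sdiff hA (hf.integrableOn (s := D))
  rw [inter_comm] at hsplitD
  rw [hAD'] at hup
  linarith

end Integral

lemma Monotone.exists_setOf_le_eq_Ici {F : ℝ → ℝ} (hmono : Monotone F) (hcont : Continuous F)
    {a b c : ℝ} (ha : F a < c) (hb : c ≤ F b) : ∃ t, {u | c ≤ F u} = Ici t ∧ F t = c := by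
  set S := {u | c ≤ F u}
  have hbdd : BddBelow S := ⟨a, fun u hu => (hmono.reflect_lt (ha.trans_le hu)).le⟩
  have hmem : sInf S ∈ S := (isClosed_le continuous_const hcont).csInf_mem ⟨b, hb⟩ hbdd
  have hS : S = Ici (sInf S) :=
    Subset.antisymm (fun u hu => csInf_le hbdd hu) fun u hu => hmem.trans (hmono hu)
  refine ⟨sInf S, hS, ?_⟩
  have hat : a ≤ sInf S := (hmono.reflect_lt (ha.trans_le hmem)).le
  obtain ⟨u, hu, hFu⟩ := intermediate_value_Icc hat hcont.continuousOn ⟨ha.le, hmem⟩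
  have : sInf S ≤ u := csInf_le hbdd hFu.ge
  rwa [le_antisymm hu.2 this] at hFu

lemma measureReal_Ici_eq_one_sub_cdf (μ : Measure ℝ) [IsProbabilityMeasure μ] {t : ℝ}
    (ht : ContinuousAt (cdf μ) t) : μ.real (Ici t) = 1 - cdf μ t := by
  have h := (cdf μ).measure_Ici (tendsto_cdf_atTop μ) t
  rw [measure_cdf, ht.continuousWithinAt.leftLim_eq] at h
  rw [measureReal_def, h, ENNReal.toReal_ofReal (sub_nonneg.2 (cdf_le_one μ t))]

lemma exists_threshold_of_continuous_cdf {Ω : Type*} [MeasurableSpace Ω] {P : Measure Ω}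
    [IsProbabilityMeasure P] {q : Ω → ℝ} (hq : Measurable q) {F : ℝ → ℝ}
    (hF : ∀ t, F t = P.real {ω | q ω ≤ t}) (hFc : Continuous F) {c : ℝ} (hc : c ∈ Ioo 0 1) :
    ∃ t, (∀ u, c ≤ F u ↔ t ≤ u) ∧ P.real (q ⁻¹' Ici t) = 1 - c := by
  have : IsProbabilityMeasure (P.map q) := Measure.isProbabilityMeasure_map hq.aemeasurable
  obtain rfl : F = cdf (P.map q) := funext fun t => by
    rw [hF, cdf_eq_real, map_measureReal_apply hq measurableSet_Iic]; rfl
  obtain ⟨a, ha⟩ := ((tendsto_cdf_atBot _).eventually (gt_mem_nhds hc.1)).exists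
  obtain ⟨b, hb⟩ := ((tendsto_cdf_atTop _).eventually (lt_mem_nhds hc.2)).exists
  obtain ⟨t, hS, ht⟩ := (cdf _).mono.exists_setOf_le_eq_Ici hFc ha hb.le
  refine ⟨t, fun u => Set.ext_iff.1 hS u, ?_⟩
  rw [← map_measureReal_apply hq measurableSet_Ici,
    measureReal_Ici_eq_one_sub_cdf _ hFc.continuousAt, ht]

lemma ciSup_eq_apply_of_forall_le {ι α : Type*} [Finite ι] [ConditionallyCompleteLattice α]
    {f : ι → α} {i : ι} (h : ∀ k, f k ≤ f i) : ⨆ k, f k = f i :=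
  have : Nonempty ι := ⟨i⟩
  le_antisymm (ciSup_le h) (le_ciSup (finite_range f).bddAbove i)

section Classifier

variable {Ω α ι : Type*} {X : Ω → α} {Y : Ω → ι}

lemma setOf_ne_none_eq_iUnion (c : α → Option ι) : {x | c x ≠ none} = ⋃ k, c ⁻¹' {some k} := by
  ext x
  simp [Option.ne_none_iff_exists']

lemma setOf_eq_some_eq_iUnion (c : α → Option ι) :
    {ω | c (X ω) = some (Y ω)} = ⋃ k, X ⁻¹' (c ⁻¹' {some k}) ∩ Y ⁻¹' {k} := by
  ext ω
  simp

lemma preimage_some_eq_inter {c : α → Option ι} {g : α → ι}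
    (hcg : ∀ x, c x = none ∨ c x = some (g x)) (k : ι) :
    c ⁻¹' {some k} = {x | c x ≠ none} ∩ g ⁻¹' {k} := by
  ext x
  rcases hcg x with hx | hx <;> simp [hx, eq_comm]

variable [MeasurableSpace Ω] [MeasurableSpace α] {P : Measure Ω} {p : ι → α → ℝ}

/-- `p k x` is a version of `ℙ(Y = k | X = x)`. -/
def IsCondClassProb (P : Measure Ω) (X : Ω → α) (Y : Ω → ι) (p : ι → α → ℝ) : Prop :=
  ∀ (k : ι) (A : Set α), MeasurableSet A →
    P.real {ω | X ω ∈ A ∧ Y ω = k} = ∫ ω in X ⁻¹' A, p k (X ω) ∂P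

lemma IsCondClassProb.ae_mem_Icc [IsFiniteMeasure P] (hp : IsCondClassProb P X Y p)
    (hX : Measurable X) (hpm : ∀ k, Measurable (p k)) (k : ι) :
    ∀ᵐ ω ∂P, p k (X ω) ∈ Icc 0 1 :=
  ae_mem_Icc_of_setIntegral_preimage_eq (E := {ω | Y ω = k}) ((hpm k).comp hX)
    fun _ hB => (hp k _ (hpm k hB)).symm

lemma IsCondClassProb.integrable_comp [IsFiniteMeasure P] [Countable ι]
    (hp : IsCondClassProb P X Y p) (hX : Measurable X) (hpm : ∀ k, Measurable (p k))
    {s : α → ℝ} (hs : Measurable s) (hsp : ∀ x, ∃ k, s x = p k x) :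
    Integrable (fun ω => s (X ω)) P := by
  refine .of_bound (hs.comp hX).aestronglyMeasurable 1 ?_
  filter_upwards [ae_all_iff.2 (hp.ae_mem_Icc hX hpm)] with ω hω
  obtain ⟨k, hk⟩ := hsp (X ω)
  rw [hk, Real.norm_of_nonneg (hω k).1]
  exact (hω k).2

lemma setIntegral_ne_none_eq_sum [Fintype ι] (hX : Measurable X) {c : α → Option ι}
    (hc : ∀ k, MeasurableSet (c ⁻¹' {some k})) {f : Ω → ℝ} (hf : Integrable f P) :
    ∫ ω in X ⁻¹' {x | c x ≠ none}, f ω ∂P = ∑ k, ∫ ω in X ⁻¹' (c ⁻¹' {some k}), f ω ∂P := by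
  rw [setOf_ne_none_eq_iUnion, preimage_iUnion]
  exact integral_iUnion_fintype (fun k => hX (hc k))
    (fun i j hij =>
      ((disjoint_singleton.2 (Option.some_injective _ |>.ne hij)).preimage c).preimage X)
    fun _ => hf.integrableOn

variable [MeasurableSpace ι] [MeasurableSingletonClass ι]

lemma measurableSet_preimage_some {c : α → Option ι} {g : α → ι}
    (hcg : ∀ x, c x = none ∨ c x = some (g x)) (hc : MeasurableSet {x | c x ≠ none})
    (hg : Measurable g) (k : ι) : MeasurableSet (c ⁻¹' {some k}) := by
  rw [preimage_some_eq_inter hcg]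
  exact hc.inter (hg (measurableSet_singleton k))

variable [Fintype ι]

lemma measurableSet_setOf_eq_some (hX : Measurable X) (hY : Measurable Y) {c : α → Option ι}
    (hc : ∀ k, MeasurableSet (c ⁻¹' {some k})) : MeasurableSet {ω | c (X ω) = some (Y ω)} := by
  rw [setOf_eq_some_eq_iUnion]
  exact .iUnion fun k => (hX (hc k)).inter (hY (measurableSet_singleton k))

lemma measureReal_misclassified_eq [IsFiniteMeasure P] (hX : Measurable X) (hY : Measurable Y)
    {c : α → Option ι} (hc : ∀ k, MeasurableSet (c ⁻¹' {some k})) :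
    P.real {ω | c (X ω) ≠ some (Y ω) ∧ c (X ω) ≠ none} =
      P.real (X ⁻¹' {x | c x ≠ none}) - P.real {ω | c (X ω) = some (Y ω)} := by
  have hsub : {ω | c (X ω) = some (Y ω)} ⊆ X ⁻¹' {x | c x ≠ none} :=
    fun ω (hω : c (X ω) = some (Y ω)) => by simp [hω]
  rw [← measureReal_sdiff hsub (measurableSet_setOf_eq_some hX hY hc)]
  congr 1
  ext ω
  simp [and_comm]

lemma measureReal_eq_some_eq_sum [IsFiniteMeasure P] (hp : IsCondClassProb P X Y p)
    (hX : Measurable X) (hY : Measurable Y) {c : α → Option ι}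
    (hc : ∀ k, MeasurableSet (c ⁻¹' {some k})) :
    P.real {ω | c (X ω) = some (Y ω)} = ∑ k, ∫ ω in X ⁻¹' (c ⁻¹' {some k}), p k (X ω) ∂P := by
  rw [setOf_eq_some_eq_iUnion, measureReal_iUnion_fintype
    (fun i j hij => ((disjoint_singleton.2 hij).preimage Y).mono inter_subset_right
      inter_subset_right)
    fun k => (hX (hc k)).inter (hY (measurableSet_singleton k))]
  exact Finset.sum_congr rfl fun k _ => hp k _ (hc k)

lemma measureReal_eq_some_le [IsFiniteMeasure P] (hp : IsCondClassProb P X Y p)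
    (hX : Measurable X) (hY : Measurable Y) {c : α → Option ι}
    (hc : ∀ k, MeasurableSet (c ⁻¹' {some k})) {s : α → ℝ} (hps : ∀ k x, p k x ≤ s x)
    (hpi : ∀ k, Integrable (fun ω => p k (X ω)) P) (hsi : Integrable (fun ω => s (X ω)) P) :
    P.real {ω | c (X ω) = some (Y ω)} ≤ ∫ ω in X ⁻¹' {x | c x ≠ none}, s (X ω) ∂P := by
  rw [measureReal_eq_some_eq_sum hp hX hY hc, setIntegral_ne_none_eq_sum hX hc hsi]
  exact Finset.sum_le_sum fun k _ =>
    setIntegral_mono_on (hpi k).integrableOn hsi.integrableOn (hX (hc k)) fun ω _ => hps k (X ω)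

lemma measureReal_eq_some_eq [IsFiniteMeasure P] (hp : IsCondClassProb P X Y p)
    (hX : Measurable X) (hY : Measurable Y) {c : α → Option ι}
    (hc : ∀ k, MeasurableSet (c ⁻¹' {some k})) {g : α → ι}
    (hcg : ∀ x, c x = none ∨ c x = some (g x)) {s : α → ℝ} (hsg : ∀ x, s x = p (g x) x)
    (hsi : Integrable (fun ω => s (X ω)) P) :
    P.real {ω | c (X ω) = some (Y ω)} = ∫ ω in X ⁻¹' {x | c x ≠ none}, s (X ω) ∂P := by
  rw [measureReal_eq_some_eq_sum hp hX hY hc, setIntegral_ne_none_eq_sum hX hc hsi]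
  refine Finset.sum_congr rfl fun k _ => setIntegral_congr_fun (hX (hc k))
    fun ω (hω : c (X ω) = some k) => ?_
  rcases hcg (X ω) with hx | hx <;> rw [hx] at hω
  · simp at hω
  · rw [hsg, Option.some_inj.1 hω]

end Classifier

/-- Classifiers with reject option are maps `𝒳 → Option (Fin K)`, `none` playing the role of the
reject symbol `ℜ`. -/
theorem eero_optimal_reject_rule_general
    {Ω : Type*} [MeasurableSpace Ω] (P : Measure Ω) [IsProbabilityMeasure P]
    {d K : ℕ}
    (X : Ω → (Fin d → ℝ)) (Y : Ω → Fin K) (hX : Measurable X) (hY : Measurable Y)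
    -- conditional probabilities `p k x = ℙ(Y = k | X = x)`
    (p : Fin K → (Fin d → ℝ) → ℝ) (hpmeas : ∀ k, Measurable (p k))
    (hcond : ∀ (k : Fin K) (A : Set (Fin d → ℝ)), MeasurableSet A →
      (P {ω | X ω ∈ A ∧ Y ω = k}).toReal = ∫ ω in X ⁻¹' A, p k (X ω) ∂P)
    -- the score function `s x = max_k p k x`
    (s : (Fin d → ℝ) → ℝ) (hs : ∀ x, s x = ⨆ k : Fin K, p k x)
    -- `Fs` is the CDF of `s(X)`, assumed continuous
    (Fs : ℝ → ℝ) (hFs : ∀ t, Fs t = (P {ω | s (X ω) ≤ t}).toReal)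
    (hFscont : Continuous Fs)
    (ε : ℝ) (hε : ε ∈ Set.Ioo (0 : ℝ) 1)
    -- `g` is a Bayes classifier: `g x ∈ argmax_k p k x`
    (g : (Fin d → ℝ) → Fin K) (hg : Measurable g) (hgopt : ∀ x k, p k x ≤ p (g x) x)
    -- the plug-in rule `h*_ε`
    (hstar : (Fin d → ℝ) → Option (Fin K))
    (hstardef : ∀ x, hstar x = if 1 - ε ≤ Fs (s x) then some (g x) else none)
    -- an arbitrary measurable competitor rejecting with probability exactly `1 - ε`
    (h : (Fin d → ℝ) → Option (Fin K))
    (hhmeas : ∀ o : Option (Fin K), MeasurableSet (h ⁻¹' {o}))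
    (hrej : (P {ω | h (X ω) = none}).toReal = 1 - ε) :
    (P {ω | hstar (X ω) ≠ some (Y ω) ∧ hstar (X ω) ≠ none}).toReal ≤
      (P {ω | h (X ω) ≠ some (Y ω) ∧ h (X ω) ≠ none}).toReal := by
  have hp : IsCondClassProb P X Y p := hcond
  have hsg (x : Fin d → ℝ) : s x = p (g x) x := (hs x).trans (ciSup_eq_apply_of_forall_le (hgopt x))
  have hsm : Measurable s := by rw [show s = _ from funext hs]; exact .iSup hpmeas
  have hpi (k : Fin K) := hp.integrable_comp hX hpmeas (hpmeas k) fun x => ⟨k, rfl⟩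
  have hsi := hp.integrable_comp hX hpmeas hsm fun x => ⟨g x, hsg x⟩
  obtain ⟨t, hFt, hPt⟩ := exists_threshold_of_continuous_cdf (hsm.comp hX) hFs hFscont
    (c := 1 - ε) ⟨by linarith [hε.2], by linarith [hε.1]⟩
  have hstar_accept : {x | hstar x ≠ none} = s ⁻¹' Ici t := by
    ext x
    simp [hstardef, hFt]
  have hstar_bayes (x : Fin d → ℝ) : hstar x = none ∨ hstar x = some (g x) := by
    rw [hstardef]; split_ifs <;> simp
  have hstar_meas :=
    measurableSet_preimage_some hstar_bayes (hstar_accept ▸ hsm measurableSet_Ici) hg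
  have hh_meas (k : Fin K) : MeasurableSet (h ⁻¹' {some k}) := hhmeas (some k)
  have hPstar : P.real (X ⁻¹' (s ⁻¹' Ici t)) = ε := hPt.trans (by ring)
  have hPh : P.real (X ⁻¹' {x | h x ≠ none}) = ε :=
    (probReal_compl_eq_one_sub (hX (hhmeas none))).trans
      (show 1 - (P {ω | h (X ω) = none}).toReal = ε by linarith)
  change P.real _ ≤ P.real _
  calc P.real _ = ε - ∫ ω in X ⁻¹' (s ⁻¹' Ici t), s (X ω) ∂P := by
        rw [measureReal_misclassified_eq hX hY hstar_meas,
          measureReal_eq_some_eq hp hX hY hstar_meas hstar_bayes hsg hsi, hstar_accept, hPstar]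
    _ ≤ ε - ∫ ω in X ⁻¹' {x | h x ≠ none}, s (X ω) ∂P :=
        sub_le_sub_left (setIntegral_le_setIntegral_of_measureReal_eq hsi
          (hX (hhmeas none)).compl (hX (hsm measurableSet_Ici)) (fun ω hω => hω)
          (fun ω hω => (not_le.1 hω).le) (hPh.trans hPstar.symm)) ε
    _ ≤ P.real _ := by
        rw [measureReal_misclassified_eq hX hY hh_meas, hPh]
        exact sub_le_sub_left (measureReal_eq_some_le hp hX hY hh_meas
          (fun k x => hsg x ▸ hgopt x k) hpi hsi) ε

/-- Optimality of the plug-in rule `h*_ε` among all measurable classifiers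
with reject option whose rejection probability equals `1 - ε`.  Classifiers with reject option
are maps `𝒳 → Option (Fin K)`, `none` playing the role of the reject symbol `ℜ`. -/
theorem eero_optimal_reject_rule
    {Ω : Type*} [MeasurableSpace Ω] (P : Measure Ω) [IsProbabilityMeasure P]
    {d K : ℕ} (hK : 2 ≤ K)
    (X : Ω → (Fin d → ℝ)) (Y : Ω → Fin K) (hX : Measurable X) (hY : Measurable Y)
    -- conditional probabilities `p k x = ℙ(Y = k | X = x)`
    (p : Fin K → (Fin d → ℝ) → ℝ) (hpmeas : ∀ k, Measurable (p k))
    (hcond : ∀ (k : Fin K) (A : Set (Fin d → ℝ)), MeasurableSet A →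
      (P {ω | X ω ∈ A ∧ Y ω = k}).toReal = ∫ ω in X ⁻¹' A, p k (X ω) ∂P)
    -- the score function `s x = max_k p k x`
    (s : (Fin d → ℝ) → ℝ) (hs : ∀ x, s x = ⨆ k : Fin K, p k x)
    -- `Fs` is the CDF of `s(X)`, assumed continuous
    (Fs : ℝ → ℝ) (hFs : ∀ t, Fs t = (P {ω | s (X ω) ≤ t}).toReal)
    (hFscont : Continuous Fs)
    (ε : ℝ) (hε : ε ∈ Set.Ioo (0 : ℝ) 1)
    -- `g` is a Bayes classifier: `g x ∈ argmax_k p k x`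
    (g : (Fin d → ℝ) → Fin K) (hg : Measurable g) (hgopt : ∀ x k, p k x ≤ p (g x) x)
    -- the plug-in rule `h*_ε`
    (hstar : (Fin d → ℝ) → Option (Fin K))
    (hstardef : ∀ x, hstar x = if 1 - ε ≤ Fs (s x) then some (g x) else none)
    -- an arbitrary measurable competitor rejecting with probability exactly `1 - ε`
    (h : (Fin d → ℝ) → Option (Fin K))
    (hhmeas : ∀ o : Option (Fin K), MeasurableSet (h ⁻¹' {o}))
    (hrej : (P {ω | h (X ω) = none}).toReal = 1 - ε) :
    (P {ω | hstar (X ω) ≠ some (Y ω) ∧ hstar (X ω) ≠ none}).toReal ≤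
      (P {ω | h (X ω) ≠ some (Y ω) ∧ h (X ω) ≠ none}).toReal :=
  eero_optimal_reject_rule_general P X Y hX hY p hpmeas hcond s hs Fs hFs hFscont ε hε g hg hgopt
    hstar hstardef h hhmeas hrej
end

section
/- Let ŝ : 𝒳 → ℝ be a measurable score function such that the cumulative distribution function F of ŝ(X) is continuous. Let X₁,…,X_N be i.i.d. copies of X, independent of X, and let F̂(t) = (1/N) Σ_{i=1}^N 1{ŝ(X_i) ≤ t} be the empirical CDF of the scores. For ε ∈ (0,1) define the empirical reject rule ĥ_ε(x) = ℜ if F̂(ŝ(x)) < 1−ε and ĥ_ε(x) = ĝ(x) otherwise. Then |P(ĥ_ε(X) = ℜ) − (1−ε)| ≤ C/√N with the explicit constant C = 2√(π/2), where the probability is taken over both X and the sample X₁,…,X_N; this bound holds whatever the distribution of X and whatever the measurable score ŝ. -/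
/-!
Write `S = ŝ(X)` and `Yᵢ = ŝ(Xᵢ)`. Given `S = s`, the count `#{i | Yᵢ ≤ s}` is binomial with
parameters `N` and `F(s)`. Since `F` is continuous, `F(S)` is uniform on `[0, 1]`, and the beta
integral `∫₀¹ C(N, j) u^j (1 - u)^(N - j) du = 1 / (N + 1)` shows that the rank `#{i | Yᵢ ≤ S}`
is uniform on `{0, …, N}`. The rule rejects exactly when this rank is below `M = ⌈N (1 - ε)⌉`,
so the rejection probability is exactly `M / (N + 1)`, which is within `1 / (N + 1) ≤ 1 / √N`
of `1 - ε`.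
-/

open MeasureTheory ProbabilityTheory Set Filter Topology
open scoped ENNReal Nat Finset

theorem integral_pow_mul_one_sub_pow (a b : ℕ) :
    ∫ x in (0 : ℝ)..1, x ^ a * (1 - x) ^ b = (a ! * b ! : ℝ) / (a + b + 1)! := by
  have h := Complex.betaIntegral_eq_Gamma_mul_div (a + 1) (b + 1)
    (by simp only [Complex.add_re, Complex.natCast_re, Complex.one_re]; positivity)
    (by simp only [Complex.add_re, Complex.natCast_re, Complex.one_re]; positivity)
  rw [show (a + 1 + (b + 1) : ℂ) = ((a + b + 1 : ℕ) : ℂ) + 1 by push_cast; ring,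
    Complex.Gamma_nat_eq_factorial, Complex.Gamma_nat_eq_factorial,
    Complex.Gamma_nat_eq_factorial, Complex.betaIntegral] at h
  simp only [add_sub_cancel_right, Complex.cpow_natCast] at h
  rw [← Complex.ofReal_inj, ← intervalIntegral.integral_ofReal]
  push_cast
  exact h

theorem integral_choose_mul_pow_mul_one_sub_pow {n j : ℕ} (hj : j ≤ n) :
    ∫ x in (0 : ℝ)..1, n.choose j * x ^ j * (1 - x) ^ (n - j) = 1 / (n + 1) := by
  simp_rw [mul_assoc, intervalIntegral.integral_const_mul, integral_pow_mul_one_sub_pow,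
    Nat.add_sub_cancel' hj, Nat.factorial_succ, ← Nat.choose_mul_factorial_mul_factorial hj]
  have := (Nat.choose_pos hj).ne'
  push_cast
  field_simp

namespace ProbabilityTheory

section ProbabilityIntegralTransform

variable {ν : Measure ℝ} [IsProbabilityMeasure ν]

theorem measure_cdf_preimage_Iic (hc : Continuous (cdf ν)) {u : ℝ} (hu : u ∈ Ico 0 1) :
    ν (cdf ν ⁻¹' Iic u) = ENNReal.ofReal u := by
  set A := cdf ν ⁻¹' Iic u
  obtain ⟨b, hb⟩ := ((tendsto_cdf_atTop ν).eventually (lt_mem_nhds hu.2)).exists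
  have hbdd : b ∈ upperBounds A := fun x hx =>
    not_lt.1 fun hbx => (hx.trans_lt hb).not_ge (monotone_cdf ν hbx.le)
  rcases A.eq_empty_or_nonempty with hA | hA
  · obtain rfl : u = 0 := by
      refine le_antisymm (not_lt.1 fun hu0 => ?_) hu.1
      obtain ⟨a, ha⟩ := ((tendsto_cdf_atBot ν).eventually (gt_mem_nhds hu0)).exists
      exact hA.subset ha.le
    simp [hA]
  -- `A` is a closed down-set, hence `Iic t`, and by continuity `cdf ν` reaches `u` at `t`.
  set t := sSup A
  have htA : t ∈ A := (isClosed_le hc continuous_const).csSup_mem hA ⟨b, hbdd⟩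
  have hAt : A = Iic t := Subset.antisymm (fun x hx => le_csSup ⟨b, hbdd⟩ hx)
    fun x hx => (monotone_cdf ν hx).trans htA
  have hFt : cdf ν t = u := by
    refine le_antisymm htA (not_lt.1 fun hlt => ?_)
    have hright : ∀ᶠ x in 𝓝[>] t, cdf ν x < u ∧ t < x :=
      (((hc.tendsto t).eventually (gt_mem_nhds hlt)).filter_mono nhdsWithin_le_nhds).and
        self_mem_nhdsWithin
    obtain ⟨x, hx, htx⟩ := hright.exists
    exact (le_csSup ⟨b, hbdd⟩ (show x ∈ A from hx.le)).not_gt htx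
  rw [hAt, ← ofReal_cdf, hFt]

theorem map_cdf_eq_volume_restrict (hc : Continuous (cdf ν)) :
    ν.map (cdf ν) = volume.restrict (Icc 0 1) := by
  have : IsProbabilityMeasure (ν.map (cdf ν)) := Measure.isProbabilityMeasure_map hc.aemeasurable
  refine Measure.ext_of_Iic _ _ fun u => ?_
  rw [Measure.map_apply hc.measurable measurableSet_Iic,
    Measure.restrict_apply measurableSet_Iic]
  rcases lt_or_ge u 0 with hu0 | hu0
  · have h1 : cdf ν ⁻¹' Iic u = ∅ :=
      eq_empty_of_forall_notMem fun x hx => (hu0.trans_le (cdf_nonneg ν x)).not_ge hx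
    have h2 : Iic u ∩ Icc (0 : ℝ) 1 = ∅ :=
      eq_empty_of_forall_notMem fun x hx => (hu0.trans_le hx.2.1).not_ge hx.1
    rw [h1, h2, measure_empty, measure_empty]
  rcases lt_or_ge u 1 with hu1 | hu1
  · have h : Iic u ∩ Icc (0 : ℝ) 1 = Icc 0 u := by
      ext x; simp only [mem_inter_iff, mem_Iic, mem_Icc]; grind
    rw [measure_cdf_preimage_Iic hc ⟨hu0, hu1⟩, h, Real.volume_Icc, sub_zero]
  · have h1 : cdf ν ⁻¹' Iic u = univ := eq_univ_of_forall fun x => (cdf_le_one ν x).trans hu1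
    rw [h1, inter_eq_right.2 fun x hx => hx.2.trans hu1, Real.volume_Icc, measure_univ]
    norm_num

end ProbabilityIntegralTransform

section IndependentEvents

theorem iIndepFun.iIndepSet_preimage {Ω ι : Type*} [MeasurableSpace Ω] {μ : Measure Ω}
    {β : ι → Type*} [∀ i, MeasurableSpace (β i)] {f : ∀ i, Ω → β i} (hf : iIndepFun f μ)
    {B : ∀ i, Set (β i)} (hB : ∀ i, MeasurableSet (B i)) :
    iIndepSet (fun i => f i ⁻¹' B i) μ :=
  (iIndepSet_iff_iIndep _ _).2 <| iIndep_of_iIndep_of_le hf.iIndep fun i =>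
    MeasurableSpace.generateFrom_le <| by rintro _ rfl; exact ⟨B i, hB i, rfl⟩

variable {Ω ι : Type*} [Fintype ι]

open scoped Classical in
theorem setOf_filter_mem_eq_iInter (A : ι → Set Ω) (T : Finset ι) :
    {ω | ({i | ω ∈ A i} : Finset ι) = T} = ⋂ i, if i ∈ T then A i else (A i)ᶜ := by
  ext ω
  simp only [mem_ofPred_eq, Finset.ext_iff, Finset.mem_filter, Finset.mem_univ, true_and,
    mem_iInter]
  refine forall_congr' fun i => ?_
  split_ifs with hi <;> simp [hi]

variable [MeasurableSpace Ω] {μ : Measure Ω} {A : ι → Set Ω}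

open scoped Classical in
theorem iIndepSet.measure_filter_mem_eq (hA : iIndepSet A μ) (hAm : ∀ i, MeasurableSet (A i))
    {p : ℝ} (hp : ∀ i, μ.real (A i) = p) (T : Finset ι) :
    μ {ω | ({i | ω ∈ A i} : Finset ι) = T} =
      ENNReal.ofReal (p ^ #T * (1 - p) ^ (Fintype.card ι - #T)) := by
  have := hA.isProbabilityMeasure
  have hfactor (i : ι) : μ (if i ∈ T then A i else (A i)ᶜ) =
      ENNReal.ofReal (if i ∈ T then p else 1 - p) := by
    split_ifs
    · rw [← hp i, ofReal_measureReal]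
    · rw [prob_compl_eq_one_sub (hAm i), ← hp i, ENNReal.ofReal_sub _ measureReal_nonneg,
        ofReal_measureReal, ENNReal.ofReal_one]
  rw [setOf_filter_mem_eq_iInter, ((iIndepSet_iff_iIndep _ _).1 hA).meas_iInter fun i => ?_]
  · simp_rw [hfactor]
    rw [← ENNReal.ofReal_prod_of_nonneg fun i _ => ?_, Finset.prod_ite, Finset.prod_const,
      Finset.prod_const, ← Finset.card_compl]
    · simp [Finset.compl_eq_univ_sdiff, Finset.filter_not]
    · have : μ.real (A i) ≤ 1 := measureReal_le_one
      split_ifs <;> linarith [hp i, measureReal_nonneg (μ := μ) (s := A i)]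
  · have hgen : MeasurableSet[MeasurableSpace.generateFrom {A i}] (A i) :=
      MeasurableSpace.measurableSet_generateFrom rfl
    split_ifs
    · exact hgen
    · exact hgen.compl

open scoped Classical in
theorem iIndepSet.measure_card_filter_mem_eq (hA : iIndepSet A μ)
    (hAm : ∀ i, MeasurableSet (A i)) {p : ℝ} (hp : ∀ i, μ.real (A i) = p) (j : ℕ) :
    μ {ω | #{i | ω ∈ A i} = j} =
      ENNReal.ofReal ((Fintype.card ι).choose j * p ^ j * (1 - p) ^ (Fintype.card ι - j)) := by
  set occurring : Ω → Finset ι := fun ω => {i | ω ∈ A i}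
  have hfiber (T : Finset ι) : MeasurableSet (occurring ⁻¹' {T}) := by
    change MeasurableSet {ω | ({i | ω ∈ A i} : Finset ι) = T}
    rw [setOf_filter_mem_eq_iInter]
    refine .iInter fun i => ?_
    split_ifs
    · exact hAm i
    · exact (hAm i).compl
  have hset : {ω | #(occurring ω) = j} =
      occurring ⁻¹' ↑(Finset.powersetCard j (Finset.univ : Finset ι)) := by
    ext ω; simp
  have hterm (T) (hT : T ∈ Finset.powersetCard j Finset.univ) :
      μ (occurring ⁻¹' {T}) = ENNReal.ofReal (p ^ j * (1 - p) ^ (Fintype.card ι - j)) := by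
    rw [← Finset.mem_powersetCard_univ.1 hT]
    exact hA.measure_filter_mem_eq hAm hp T
  rw [hset, ← sum_measure_preimage_singleton _ fun T _ => hfiber T, Finset.sum_congr rfl hterm,
    Finset.sum_const, Finset.card_powersetCard, Finset.card_univ, nsmul_eq_mul,
    ← ENNReal.ofReal_natCast, ← ENNReal.ofReal_mul (Nat.cast_nonneg _), mul_assoc]

end IndependentEvents

section Rank

variable {Ω ι : Type*} [Fintype ι]

theorem measurable_card_filter_snd_le :
    Measurable fun q : ℝ × (ι → ℝ) => #{i | q.2 i ≤ q.1} := by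
  simp_rw [Finset.card_filter]
  exact Finset.measurable_sum _ fun i _ => Measurable.ite
    (measurableSet_le ((measurable_pi_apply i).comp measurable_snd) measurable_fst)
    measurable_const measurable_const

variable [MeasurableSpace Ω] {P : Measure Ω} [IsProbabilityMeasure P] {S : Ω → ℝ}
  {Y : ι → Ω → ℝ}

theorem measure_card_filter_le_eq_inv_succ (hS : Measurable S) (hY : ∀ i, Measurable (Y i))
    (hSY : IndepFun S (fun ω i => Y i ω) P) (hiid : iIndepFun Y P)
    (hident : ∀ i, P.map (Y i) = P.map S) (hc : Continuous (cdf (P.map S)))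
    {j : ℕ} (hj : j ≤ Fintype.card ι) :
    P {ω | #{i | Y i ω ≤ S ω} = j} = (Fintype.card ι + 1 : ℝ≥0∞)⁻¹ := by
  set ν := P.map S
  set n := Fintype.card ι
  have : IsProbabilityMeasure ν := Measure.isProbabilityMeasure_map hS.aemeasurable
  set V : Ω → ι → ℝ := fun ω i => Y i ω
  have hV : Measurable V := measurable_pi_lambda _ hY
  set E := {q : ℝ × (ι → ℝ) | #{i | q.2 i ≤ q.1} = j}
  have hE : MeasurableSet E := measurable_card_filter_snd_le (measurableSet_singleton j)
  set g : ℝ → ℝ := fun u => n.choose j * u ^ j * (1 - u) ^ (n - j)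
  have hg : Continuous g := by fun_prop
  have hg_nonneg : 0 ≤ᵐ[volume.restrict (Icc 0 1)] g :=
    ae_restrict_of_forall_mem measurableSet_Icc fun u hu =>
      mul_nonneg (mul_nonneg (Nat.cast_nonneg _) (pow_nonneg hu.1 _))
        (pow_nonneg (sub_nonneg.2 hu.2) _)
  have hsection (s : ℝ) : P.map V (Prod.mk s ⁻¹' E) = ENNReal.ofReal (g (cdf ν s)) := by
    rw [Measure.map_apply hV (measurable_prodMk_left hE)]
    convert (hiid.iIndepSet_preimage (B := fun _ => Iic s) fun _ => measurableSet_Iic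
      ).measure_card_filter_mem_eq (fun i => hY i measurableSet_Iic) (fun i => ?_) j using 2
    · ext ω; simp [V, E]
    · rw [cdf_eq_real, ← hident i, map_measureReal_apply (hY i) measurableSet_Iic]
  calc P {ω | #{i | Y i ω ≤ S ω} = j} = P.map (fun ω => (S ω, V ω)) E := by
        rw [Measure.map_apply (hS.prodMk hV) hE]; rfl
    _ = ν.prod (P.map V) E := by
        rw [(indepFun_iff_map_prod_eq_prod_map_map hS.aemeasurable hV.aemeasurable).1 hSY]
    _ = ∫⁻ s, ENNReal.ofReal (g (cdf ν s)) ∂ν := by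
        rw [Measure.prod_apply hE]; simp_rw [hsection]
    _ = ∫⁻ u in Icc 0 1, ENNReal.ofReal (g u) := by
        rw [← lintegral_map (f := fun u => ENNReal.ofReal (g u)) (by fun_prop) hc.measurable,
          map_cdf_eq_volume_restrict hc]
    _ = ENNReal.ofReal (∫ u in (0 : ℝ)..1, g u) := by
        rw [intervalIntegral.integral_of_le zero_le_one, ← integral_Icc_eq_integral_Ioc,
          ofReal_integral_eq_lintegral_ofReal hg.integrableOn_Icc hg_nonneg]
    _ = (n + 1 : ℝ≥0∞)⁻¹ := by
        rw [integral_choose_mul_pow_mul_one_sub_pow hj, one_div,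
          ENNReal.ofReal_inv_of_pos (by positivity)]
        norm_cast

theorem measure_card_filter_le_lt_eq (hS : Measurable S) (hY : ∀ i, Measurable (Y i))
    (hSY : IndepFun S (fun ω i => Y i ω) P) (hiid : iIndepFun Y P)
    (hident : ∀ i, P.map (Y i) = P.map S) (hc : Continuous (cdf (P.map S)))
    {M : ℕ} (hM : M ≤ Fintype.card ι + 1) :
    P {ω | #{i | Y i ω ≤ S ω} < M} = M / (Fintype.card ι + 1) := by
  set R : Ω → ℕ := fun ω => #{i | Y i ω ≤ S ω}
  have hR : Measurable R :=
    measurable_card_filter_snd_le.comp (hS.prodMk (measurable_pi_lambda _ hY))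
  have hset : {ω | R ω < M} = R ⁻¹' ↑(Finset.range M) := by ext; simp
  rw [hset, ← sum_measure_preimage_singleton _ fun j _ => hR (measurableSet_singleton j)]
  calc ∑ j ∈ Finset.range M, P (R ⁻¹' {j})
      = ∑ j ∈ Finset.range M, (Fintype.card ι + 1 : ℝ≥0∞)⁻¹ :=
        Finset.sum_congr rfl fun j hj =>
          measure_card_filter_le_eq_inv_succ hS hY hSY hiid hident hc
            (Nat.lt_succ_iff.1 ((Finset.mem_range.1 hj).trans_le hM))
    _ = M / (Fintype.card ι + 1) := by
        rw [Finset.sum_const, Finset.card_range, nsmul_eq_mul, ENNReal.div_eq_inv_mul, mul_comm]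

end Rank

end ProbabilityTheory

theorem abs_natCeil_mul_div_succ_sub_le {x : ℝ} (hx : x ∈ Icc 0 1) (N : ℕ) :
    |⌈N * x⌉₊ / (N + 1 : ℝ) - x| ≤ 1 / (N + 1) := by
  have hN : (0 : ℝ) < N + 1 := by positivity
  have hlow : N * x ≤ ⌈N * x⌉₊ := Nat.le_ceil _
  have hup : (⌈N * x⌉₊ : ℝ) < N * x + 1 := Nat.ceil_lt_add_one (by nlinarith [hx.1])
  rw [div_sub' hN.ne', abs_div, abs_of_pos hN]
  gcongr
  rw [abs_le]
  constructor <;> nlinarith [hx.1, hx.2]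

theorem one_div_succ_le_div_sqrt {N : ℕ} (hN : 0 < N) {C : ℝ} (hC : 1 ≤ C) :
    1 / (N + 1 : ℝ) ≤ C / √N := by
  have hsqrt : 0 < √(N : ℝ) := Real.sqrt_pos.2 (by exact_mod_cast hN)
  calc 1 / (N + 1 : ℝ) ≤ 1 / √N := by
        gcongr
        have : (1 : ℝ) ≤ N := Nat.one_le_cast.2 hN
        exact Real.sqrt_le_iff.2 ⟨by positivity, by nlinarith⟩
    _ ≤ C / √N := by gcongr

/-- Distribution-free control of the rejection rate of the empirical
reject rule built from the empirical CDF of the scores of an i.i.d. sample: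
`|ℙ(ĥ_ε(X) = ℜ) − (1−ε)| ≤ C/√N` with `C = 2√(π/2)`.  `none` is the reject symbol `ℜ`. -/
theorem eero_empirical_rejection_rate
    {Ω : Type*} [MeasurableSpace Ω] (P : Measure Ω) [IsProbabilityMeasure P]
    {d K : ℕ}
    (X : Ω → (Fin d → ℝ)) (hX : Measurable X)
    -- a measurable score function whose CDF `F` is continuous
    (shat : (Fin d → ℝ) → ℝ) (hshat : Measurable shat)
    (F : ℝ → ℝ) (hF : ∀ t, F t = (P {ω | shat (X ω) ≤ t}).toReal) (hFcont : Continuous F)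
    -- the i.i.d. sample `X₁, …, X_N`, independent of `X`
    (N : ℕ) (hN : 0 < N) (Xs : Fin N → Ω → (Fin d → ℝ)) (hXs : ∀ i, Measurable (Xs i))
    (hident : ∀ i, Measure.map (Xs i) P = Measure.map X P)
    (hiid : iIndepFun Xs P)
    (hindep : IndepFun X (fun ω i => Xs i ω) P)
    -- the empirical CDF of the scores
    (Fhat : Ω → ℝ → ℝ)
    (hFhat : ∀ ω t, Fhat ω t = (1 / (N : ℝ)) * ∑ i : Fin N, if shat (Xs i ω) ≤ t then 1 else 0)
    -- an arbitrary classifier `ĝ` and the empirical reject rule `ĥ_ε`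
    (ghat : (Fin d → ℝ) → Fin K)
    (ε : ℝ) (hε : ε ∈ Set.Ioo (0 : ℝ) 1)
    (hhat : Ω → (Fin d → ℝ) → Option (Fin K))
    (hhatdef : ∀ ω x, hhat ω x = if Fhat ω (shat x) < 1 - ε then none else some (ghat x))
    (C : ℝ) (hC : C = 2 * Real.sqrt (Real.pi / 2)) :
    |(P {ω | hhat ω (X ω) = none}).toReal - (1 - ε)| ≤ C / Real.sqrt N := by
  obtain ⟨hε0, hε1⟩ := hε
  set S : Ω → ℝ := fun ω => shat (X ω)
  set Y : Fin N → Ω → ℝ := fun i ω => shat (Xs i ω)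
  set M := ⌈(N : ℝ) * (1 - ε)⌉₊
  have hS : Measurable S := hshat.comp hX
  have := Measure.isProbabilityMeasure_map (μ := P) hS.aemeasurable
  have hreject : {ω | hhat ω (X ω) = none} = {ω | #{i | Y i ω ≤ S ω} < M} := by
    ext ω
    simp only [mem_ofPred_eq, hhatdef, hFhat, Finset.sum_boole, one_div,
      inv_mul_lt_iff₀ ((Nat.cast_pos (α := ℝ)).2 hN), ite_eq_left_iff, reduceCtorEq, imp_false,
      not_not]
    exact Nat.lt_ceil.symm
  have hcdf : ⇑(cdf (P.map S)) = F := by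
    funext t
    rw [hF, cdf_eq_real, map_measureReal_apply hS measurableSet_Iic]
    rfl
  have hrate : P {ω | #{i | Y i ω ≤ S ω} < M} = M / (N + 1) := by
    simpa using measure_card_filter_le_lt_eq hS (fun i => hshat.comp (hXs i))
      (hindep.comp hshat (measurable_pi_lambda _ fun i => hshat.comp (measurable_pi_apply i)))
      (hiid.comp _ fun _ => hshat)
      (fun i => by
        change P.map (shat ∘ Xs i) = P.map (shat ∘ X)
        rw [← Measure.map_map hshat (hXs i), hident i, Measure.map_map hshat hX])
      (hcdf ▸ hFcont) (M := M)
      (by rw [Fintype.card_fin]; exact Nat.ceil_le.2 (by push_cast; nlinarith))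
  have hC1 : 1 ≤ C := by
    have : 1 ≤ √(Real.pi / 2) := Real.one_le_sqrt.2 (by linarith [Real.pi_gt_three])
    linarith
  rw [hreject, hrate, ENNReal.toReal_div]
  simp only [ENNReal.toReal_natCast]
  calc _ ≤ 1 / (N + 1 : ℝ) := abs_natCeil_mul_div_succ_sub_le ⟨by linarith, by linarith⟩ N
    _ ≤ C / √N := one_div_succ_le_div_sqrt hN hC1
end

section
/- Consider the problem of minimizing over ε = (ε¹,…,ε^M) the objective Σ_{ℓ=1}^M ε^ℓ R̂^ℓ + β Σ_{ℓ=1}^M ε^ℓ log(ε^ℓ/π^ℓ) subject to ε^ℓ ≥ 0, Σ_ℓ ε^ℓ = 1, and Σ_ℓ ε^ℓ B̂^ℓ ≤ B̄. Its solution ε̂ is given, for every ℓ ∈ [M], by ε̂^ℓ = π^ℓ exp(−(R̂^ℓ + μ̂ B̂^ℓ)/β) / Σ_{j=1}^M π^j exp(−(R̂^j + μ̂ B̂^j)/β), where μ̂ = max{0, μ̄} and μ̄ is a solution of the equation Σ_{ℓ=1}^M (B̄ − B̂^ℓ) π^ℓ exp(−(R̂^ℓ + μ̄ B̂^ℓ)/β)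 = 0 (when μ̂ = 0 the budget constraint Σ_ℓ ε̂^ℓ B̂^ℓ ≤ B̄ must hold); such ε̂ satisfies the constraints and attains the minimum of the objective over the constraint set. -/
/-!
The Gibbs vector `ε̂ ∝ π · exp (-(R + μ̂ B) / β)` minimizes the free energy
`F_μ̂(ε) = ∑ ε (R + μ̂ B) + β KL(ε‖π)` on the simplex, because
`F_μ̂(ε) = β KL(ε‖ε̂) - β log Z` and Gibbs' inequality gives `KL(ε‖ε̂) ≥ 0`.
The objective differs from `F_μ̂` by `-μ̂ ∑ ε B`; with `μ̂ ≥ 0` this is at least `-μ̂ B̄`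
on the budget set, and equals `-μ̂ B̄` at `ε̂`, since for `μ̂ = μ̄ > 0` the equation
defining `μ̄` says exactly that `ε̂` spends the whole budget.
-/

open Finset Real

lemma sub_le_mul_log_div {p q : ℝ} (hp : 0 ≤ p) (hq : 0 < q) : p - q ≤ p * log (p / q) := by
  have h := mul_nonneg hq.le (InformationTheory.klFun_nonneg (div_nonneg hp hq.le))
  rw [InformationTheory.klFun_apply] at h
  field_simp at h
  linarith

lemma sum_mul_log_div_nonneg {ι : Type*} [Fintype ι] {p q : ι → ℝ} (hp : ∀ i, 0 ≤ p i)
    (hq : ∀ i, 0 < q i) (hpq : ∑ i, q i ≤ ∑ i, p i) : 0 ≤ ∑ i, p i * log (p i / q i) :=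
  calc (0 : ℝ) ≤ ∑ i, (p i - q i) := by rw [sum_sub_distrib]; linarith
    _ ≤ ∑ i, p i * log (p i / q i) := sum_le_sum fun i _ ↦ sub_le_mul_log_div (hp i) (hq i)

lemma isMinOn_of_isMinOn_add_mul {α : Type*} {S : Set α} {f g : α → ℝ} {μ b : ℝ} {x : α}
    (hmin : IsMinOn (fun y ↦ f y + μ * g y) S x) (hμ : 0 ≤ μ) (hslack : μ * g x = μ * b) :
    IsMinOn f (S ∩ {y | g y ≤ b}) x := by
  refine isMinOn_iff.2 fun y ⟨hyS, hyb⟩ ↦ ?_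
  have hxy : f x + μ * g x ≤ f y + μ * g y := isMinOn_iff.1 hmin y hyS
  have hgy : μ * g y ≤ μ * b := mul_le_mul_of_nonneg_left hyb hμ
  linarith

section Gibbs

variable {ι : Type*} [Fintype ι] {ρ : ι → ℝ} {c : ι → ℝ} {β : ℝ}

noncomputable def partitionFunction (ρ c : ι → ℝ) (β : ℝ) : ℝ :=
  ∑ j, ρ j * exp (-c j / β)

noncomputable def gibbsWeights (ρ c : ι → ℝ) (β : ℝ) (i : ι) : ℝ :=
  ρ i * exp (-c i / β) / partitionFunction ρ c β

lemma partitionFunction_pos [Nonempty ι] (hρ : ∀ i, 0 < ρ i) : 0 < partitionFunction ρ c β :=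
  sum_pos (fun j _ ↦ mul_pos (hρ j) (exp_pos _)) univ_nonempty

lemma gibbsWeights_pos [Nonempty ι] (hρ : ∀ i, 0 < ρ i) (i : ι) : 0 < gibbsWeights ρ c β i :=
  div_pos (mul_pos (hρ i) (exp_pos _)) (partitionFunction_pos hρ)

lemma gibbsWeights_mem_stdSimplex [Nonempty ι] (hρ : ∀ i, 0 < ρ i) :
    gibbsWeights ρ c β ∈ stdSimplex ℝ ι :=
  ⟨fun i ↦ (gibbsWeights_pos hρ i).le, by
    simp only [gibbsWeights, ← sum_div]
    exact div_self (partitionFunction_pos hρ).ne'⟩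

lemma sum_gibbsWeights_mul_eq [Nonempty ι] (hρ : ∀ i, 0 < ρ i) {f : ι → ℝ} {a : ℝ}
    (h : ∑ i, (a - f i) * ρ i * exp (-c i / β) = 0) : ∑ i, gibbsWeights ρ c β i * f i = a := by
  have hZ := (partitionFunction_pos (c := c) (β := β) hρ).ne'
  have hfZ : a * partitionFunction ρ c β = ∑ i, ρ i * exp (-c i / β) * f i := by
    simp only [sub_mul, sum_sub_distrib, mul_assoc, ← mul_sum, sub_eq_zero] at h
    rw [partitionFunction, h]
    exact sum_congr rfl fun i _ ↦ by ring
  simp only [gibbsWeights, div_mul_eq_mul_div, ← sum_div, div_eq_iff hZ, hfZ]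

lemma mul_log_div_gibbsWeights [Nonempty ι] (hρ : ∀ i, 0 < ρ i) (x : ℝ) (i : ι) :
    x * log (x / gibbsWeights ρ c β i) =
      x * log (x / ρ i) + x * c i / β + x * log (partitionFunction ρ c β) := by
  rcases eq_or_ne x 0 with rfl | hx
  · simp
  rw [log_div hx (gibbsWeights_pos hρ i).ne', log_div hx (hρ i).ne', gibbsWeights,
    log_div (mul_pos (hρ i) (exp_pos _)).ne' (partitionFunction_pos hρ).ne',
    log_mul (hρ i).ne' (exp_pos _).ne', log_exp]
  ring

lemma free_energy_eq [Nonempty ι] (hρ : ∀ i, 0 < ρ i) (hβ : β ≠ 0) {ε : ι → ℝ}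
    (hε : ∑ i, ε i = 1) :
    ∑ i, ε i * c i + β * ∑ i, ε i * log (ε i / ρ i) =
      β * ∑ i, ε i * log (ε i / gibbsWeights ρ c β i) -
        β * log (partitionFunction ρ c β) := by
  simp only [mul_log_div_gibbsWeights hρ, sum_add_distrib, ← sum_mul, hε, ← sum_div]
  field_simp
  ring

theorem isMinOn_free_energy_gibbsWeights [Nonempty ι] (hρ : ∀ i, 0 < ρ i) (hβ : 0 < β) :
    IsMinOn (fun ε ↦ ∑ i, ε i * c i + β * ∑ i, ε i * log (ε i / ρ i)) (stdSimplex ℝ ι)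
      (gibbsWeights ρ c β) := by
  refine isMinOn_iff.2 fun ε ⟨hε, hε1⟩ ↦ ?_
  have hg := gibbsWeights_mem_stdSimplex (c := c) (β := β) hρ
  have hKL : 0 ≤ ∑ i, ε i * log (ε i / gibbsWeights ρ c β i) :=
    sum_mul_log_div_nonneg hε (gibbsWeights_pos hρ) (by rw [hε1, hg.2])
  have hKL_self : ∑ i, gibbsWeights ρ c β i * log (gibbsWeights ρ c β i / gibbsWeights ρ c β i)
      = 0 := by
    simp [div_self (gibbsWeights_pos hρ _).ne']
  rw [free_energy_eq hρ hβ.ne' hε1, free_energy_eq hρ hβ.ne' hg.2, hKL_self, mul_zero]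
  linarith [mul_nonneg hβ.le hKL]

end Gibbs

theorem eero_exponential_weights_solution_general
    (M : ℕ) (hM : 2 ≤ M)
    (R : Fin M → ℝ)
    (B : Fin M → ℝ)
    (pr : Fin M → ℝ) (hpr : ∀ ℓ, 0 < pr ℓ)
    (β : ℝ) (hβ : 0 < β)
    (Bbar : ℝ)
    -- `μ̄` solves the first-order equation and `μ̂ = max{0, μ̄}`
    (μbar μhat : ℝ)
    (hμbar : ∑ ℓ, (Bbar - B ℓ) * pr ℓ * Real.exp (-(R ℓ + μbar * B ℓ) / β) = 0)
    (hμhat : μhat = max 0 μbar)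
    -- the exponential-weights vector `ε̂`
    (εhat : Fin M → ℝ)
    (hεhat : ∀ ℓ, εhat ℓ =
      pr ℓ * Real.exp (-(R ℓ + μhat * B ℓ) / β) /
        ∑ j, pr j * Real.exp (-(R j + μhat * B j) / β))
    -- when `μ̂ = 0` the budget constraint must hold for `ε̂`
    (hbudget0 : μhat = 0 → ∑ ℓ, εhat ℓ * B ℓ ≤ Bbar) :
    (∀ ℓ, 0 ≤ εhat ℓ) ∧ (∑ ℓ, εhat ℓ = 1) ∧ (∑ ℓ, εhat ℓ * B ℓ ≤ Bbar) ∧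
      (∀ ε : Fin M → ℝ, (∀ ℓ, 0 ≤ ε ℓ) → (∑ ℓ, ε ℓ = 1) → (∑ ℓ, ε ℓ * B ℓ ≤ Bbar) →
        (∑ ℓ, εhat ℓ * R ℓ) + β * ∑ ℓ, εhat ℓ * Real.log (εhat ℓ / pr ℓ) ≤
          (∑ ℓ, ε ℓ * R ℓ) + β * ∑ ℓ, ε ℓ * Real.log (ε ℓ / pr ℓ)) := by
  have : Nonempty (Fin M) := ⟨⟨0, by omega⟩⟩
  have hεhat_eq : εhat = gibbsWeights pr (fun ℓ ↦ R ℓ + μhat * B ℓ) β := funext hεhat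
  have hμhat_nonneg : 0 ≤ μhat := hμhat ▸ le_max_left _ _
  have hslack : μhat * ∑ ℓ, εhat ℓ * B ℓ = μhat * Bbar := by
    rcases hμhat_nonneg.eq_or_lt with h | h
    · simp [← h]
    have hμ : μhat = μbar := by
      rw [hμhat] at h ⊢
      exact max_eq_right (by simpa using h : 0 < μbar).le
    rw [hεhat_eq, sum_gibbsWeights_mul_eq hpr (hμ ▸ hμbar)]
  have hbudget : ∑ ℓ, εhat ℓ * B ℓ ≤ Bbar := by
    rcases hμhat_nonneg.eq_or_lt with h | h
    · exact hbudget0 h.symm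
    · exact (mul_le_mul_iff_right₀ h).1 hslack.le
  have hmin : IsMinOn (fun ε ↦ (∑ ℓ, ε ℓ * R ℓ + β * ∑ ℓ, ε ℓ * log (ε ℓ / pr ℓ)) +
      μhat * ∑ ℓ, ε ℓ * B ℓ) (stdSimplex ℝ (Fin M)) εhat := by
    convert hεhat_eq ▸ isMinOn_free_energy_gibbsWeights hpr hβ using 2 with ε
    simp only [mul_add, sum_add_distrib, mul_sum, mul_left_comm μhat]
    ring
  obtain ⟨hnonneg, hsum⟩ := hεhat_eq ▸ gibbsWeights_mem_stdSimplex hpr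
  exact ⟨hnonneg, hsum, hbudget, fun ε hε hε1 hεB ↦
    isMinOn_of_isMinOn_add_mul hmin hμhat_nonneg hslack ⟨⟨hε, hε1⟩, hεB⟩⟩

/-- The exponential-weights vector `ε̂` (Gibbs distribution with Lagrange
multiplier `μ̂ = max{0, μ̄}`) solves the budget-constrained aggregation problem:
it satisfies the simplex and budget constraints and minimizes
`∑ ε^ℓ R̂^ℓ + β ∑ ε^ℓ log(ε^ℓ/π^ℓ)` over the constraint set. -/
theorem eero_exponential_weights_solution
    (M : ℕ) (hM : 2 ≤ M)
    (R : Fin M → ℝ) (hR : ∀ ℓ, R ℓ ∈ Set.Icc (0 : ℝ) 1)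
    (B : Fin M → ℝ) (hB : ∀ ℓ, 0 < B ℓ)
    (pr : Fin M → ℝ) (hpr : ∀ ℓ, 0 < pr ℓ) (hprsum : ∑ ℓ, pr ℓ = 1)
    (β : ℝ) (hβ : 0 < β)
    (Bbar : ℝ) (hBbar : 0 < Bbar)
    -- feasibility of the budget
    (hfeas : ∃ ℓ, B ℓ ≤ Bbar)
    -- `μ̄` solves the first-order equation and `μ̂ = max{0, μ̄}`
    (μbar μhat : ℝ)
    (hμbar : ∑ ℓ, (Bbar - B ℓ) * pr ℓ * Real.exp (-(R ℓ + μbar * B ℓ) / β) = 0)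
    (hμhat : μhat = max 0 μbar)
    -- the exponential-weights vector `ε̂`
    (εhat : Fin M → ℝ)
    (hεhat : ∀ ℓ, εhat ℓ =
      pr ℓ * Real.exp (-(R ℓ + μhat * B ℓ) / β) /
        ∑ j, pr j * Real.exp (-(R j + μhat * B j) / β))
    -- when `μ̂ = 0` the budget constraint must hold for `ε̂`
    (hbudget0 : μhat = 0 → ∑ ℓ, εhat ℓ * B ℓ ≤ Bbar) :
    (∀ ℓ, 0 ≤ εhat ℓ) ∧ (∑ ℓ, εhat ℓ = 1) ∧ (∑ ℓ, εhat ℓ * B ℓ ≤ Bbar) ∧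
      (∀ ε : Fin M → ℝ, (∀ ℓ, 0 ≤ ε ℓ) → (∑ ℓ, ε ℓ = 1) → (∑ ℓ, ε ℓ * B ℓ ≤ Bbar) →
        (∑ ℓ, εhat ℓ * R ℓ) + β * ∑ ℓ, εhat ℓ * Real.log (εhat ℓ / pr ℓ) ≤
          (∑ ℓ, ε ℓ * R ℓ) + β * ∑ ℓ, ε ℓ * Real.log (ε ℓ / pr ℓ)) :=
  eero_exponential_weights_solution_general M hM R B pr hpr β hβ Bbar μbar μhat hμbar hμhat εhat
    hεhat hbudget0
end

section
/- Let ŝ : 𝒳 → ℝ be a measurable score with continuous CDF F of ŝ(X), let F̂ be the empirical CDF built from N i.i.d. copies of X independent of X, and let C = 2√(π/2). For ε ∈ (0,1) with ε + C/√N < 1, define the inflated classification rate ε̃ = ε + C/√N and the rule ĥ_{ε̃}(x) = ℜ if F̂(ŝ(x)) < 1−ε̃ and ĥ_{ε̃}(x) = ĝ(x) otherwise. Then P(ĥ_{ε̃}(X) = ℜ) ≤ 1 − ε. -/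
/-!
Rejection happens exactly when the rank `#{i | ŝ(Xᵢ) ≤ ŝ(X)}` is below `N(1 - ε̃)`. Given
`ŝ(X) = s` the rank is binomial with parameters `N` and `F s`; since `F` is continuous, `F(ŝ(X))`
is uniform on `(0, 1)`, and the Beta integral shows that the rank is uniform on `{0, …, N}`.
Hence the rejection probability is at most `⌈N(1 - ε̃)⌉ / (N + 1)`, which is at most `1 - ε` as
soon as `N(ε̃ - ε) ≥ ε`; the inflation `C/√N` gives `N(ε̃ - ε) = C√N ≥ 1`.
-/

open MeasureTheory ProbabilityTheory Set Finset
open scoped ENNReal Nat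

lemma lintegral_Ioo_pow_mul_one_sub_pow (j m : ℕ) :
    ∫⁻ x in Ioo (0 : ℝ) 1, ENNReal.ofReal (x ^ j * (1 - x) ^ m) =
      ENNReal.ofReal (j ! * m ! / (j + m + 1)!) := by
  have hbeta : beta (j + 1) (m + 1) = j ! * m ! / (j + m + 1)! := by
    rw [beta, show ((j : ℝ) + 1 + (m + 1)) = ((j + m + 1 : ℕ) : ℝ) + 1 by push_cast; ring,
      Real.Gamma_nat_eq_factorial, Real.Gamma_nat_eq_factorial, Real.Gamma_nat_eq_factorial]
  have hpos : 0 < beta (j + 1) (m + 1) := beta_pos (by positivity) (by positivity)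
  have h := lintegral_betaPDF_eq_one (α := j + 1) (β := m + 1) (by positivity) (by positivity)
  simp only [lintegral_betaPDF, add_sub_cancel_right, Real.rpow_natCast, mul_assoc,
    ENNReal.ofReal_mul (one_div_pos.2 hpos).le] at h
  rw [lintegral_const_mul' _ _ ENNReal.ofReal_ne_top, mul_comm] at h
  rw [← hbeta, ENNReal.eq_inv_of_mul_eq_one_left h, one_div, ENNReal.ofReal_inv_of_pos hpos,
    inv_inv]

lemma choose_mul_lintegral_Ioo_pow_mul_one_sub_pow {n j : ℕ} (hj : j ≤ n) :
    (n.choose j : ℝ≥0∞) * ∫⁻ x in Ioo (0 : ℝ) 1, ENNReal.ofReal (x ^ j * (1 - x) ^ (n - j)) =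
      ((n : ℝ≥0∞) + 1)⁻¹ := by
  have h : (n.choose j : ℝ) * j ! * (n - j)! = n ! := by
    exact_mod_cast Nat.choose_mul_factorial_mul_factorial hj
  rw [lintegral_Ioo_pow_mul_one_sub_pow, Nat.add_sub_cancel' hj, ← ENNReal.ofReal_natCast,
    ← ENNReal.ofReal_mul (by positivity), ← mul_div_assoc, ← mul_assoc, h, Nat.factorial_succ,
    Nat.cast_mul, div_mul_cancel_right₀ (by positivity), ENNReal.ofReal_inv_of_pos (by positivity)]
  push_cast
  rw [ENNReal.ofReal_add (by positivity) zero_le_one, ENNReal.ofReal_natCast, ENNReal.ofReal_one]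

lemma pi_card_filter_mem_eq {α ι : Type*} [MeasurableSpace α] [Fintype ι] (μ : Measure α)
    [SigmaFinite μ] {E : Set α} [DecidablePred (· ∈ E)] (hE : MeasurableSet E) (j : ℕ) :
    Measure.pi (fun _ : ι => μ) {v | #{i | v i ∈ E} = j} =
      (Fintype.card ι).choose j * μ E ^ j * μ Eᶜ ^ (Fintype.card ι - j) := by
  classical
  set f : (ι → α) → Finset ι := fun v => {i | v i ∈ E}
  have hfiber : ∀ T, f ⁻¹' {T} = Set.pi univ fun i => if i ∈ T then E else Eᶜ := by
    intro T
    ext v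
    simp only [Set.mem_preimage, Set.mem_singleton_iff, Set.mem_pi, Set.mem_univ, true_implies,
      Finset.ext_iff, Finset.mem_filter, Finset.mem_univ, true_and, f]
    refine forall_congr' fun i => ?_
    split_ifs with hi <;> simp [hi]
  have hmeas : ∀ T, MeasurableSet (f ⁻¹' {T}) := fun T => by
    rw [hfiber]; exact .univ_pi fun i => by split_ifs; exacts [hE, hE.compl]
  have hbox : ∀ T ∈ powersetCard j (univ : Finset ι),
      Measure.pi (fun _ : ι => μ) (f ⁻¹' {T}) = μ E ^ j * μ Eᶜ ^ (Fintype.card ι - j) := by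
    intro T hT
    rw [mem_powersetCard_univ] at hT
    rw [hfiber, Measure.pi_pi]
    simp only [apply_ite μ]
    rw [prod_ite, prod_const, prod_const, filter_univ_mem, filter_not, filter_univ_mem,
      ← Finset.compl_eq_univ_sdiff, card_compl, hT]
  have hset : {v | #{i | v i ∈ E} = j} = f ⁻¹' ↑(powersetCard j (univ : Finset ι)) := by
    ext v; simp [f]
  rw [hset, ← sum_measure_preimage_singleton _ fun T _ => hmeas T, sum_congr rfl hbox, sum_const,
    card_powersetCard, card_univ, nsmul_eq_mul, mul_assoc]

section ProbabilityIntegralTransform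

variable (ν : Measure ℝ) [IsProbabilityMeasure ν]

lemma ofReal_le_measure_cdf_preimage_Iic (hν : Continuous (cdf ν)) {a : ℝ} (ha : a < 1) :
    ENNReal.ofReal a ≤ ν (cdf ν ⁻¹' Iic a) := by
  rcases le_or_gt a 0 with ha0 | ha0
  · simp [ENNReal.ofReal_eq_zero.2 ha0]
  obtain ⟨x₀, hx₀⟩ := ((tendsto_cdf_atBot ν).eventually_lt_const ha0).exists
  obtain ⟨x₁, hx₁⟩ := ((tendsto_cdf_atTop ν).eventually_const_lt ha).exists
  obtain ⟨t, ht⟩ := intermediate_value_univ x₀ x₁ hν ⟨hx₀.le, hx₁.le⟩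
  calc ENNReal.ofReal a = ν (Iic t) := by rw [← ht, ofReal_cdf]
    _ ≤ ν (cdf ν ⁻¹' Iic a) :=
      measure_mono fun x hx => (monotone_cdf ν hx).trans_eq ht

lemma measure_cdf_preimage_Iic_le (hν : Continuous (cdf ν)) {a : ℝ} (ha : a < 1) :
    ν (cdf ν ⁻¹' Iic a) ≤ ENNReal.ofReal a := by
  set A := cdf ν ⁻¹' Iic a
  rcases A.eq_empty_or_nonempty with hA | hA
  · simp [hA]
  obtain ⟨x₁, hx₁⟩ := ((tendsto_cdf_atTop ν).eventually_const_lt ha).exists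
  have hbdd : BddAbove A := ⟨x₁, fun x hx =>
    le_of_lt (lt_of_not_ge fun h => (hx₁.trans_le (monotone_cdf ν h)).not_ge hx)⟩
  have hsup : sSup A ∈ A := (isClosed_Iic.preimage hν).csSup_mem hA hbdd
  calc ν A ≤ ν (Iic (sSup A)) := measure_mono fun x hx => le_csSup hbdd hx
    _ = ENNReal.ofReal (cdf ν (sSup A)) := (ofReal_cdf ν _).symm
    _ ≤ ENNReal.ofReal a := ENNReal.ofReal_le_ofReal hsup

theorem map_cdf_eq_restrict_Ioc (hν : Continuous (cdf ν)) :
    ν.map (cdf ν) = volume.restrict (Ioc 0 1) := by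
  refine Measure.ext_of_Iic _ _ fun a => ?_
  rw [Measure.map_apply hν.measurable measurableSet_Iic,
    Measure.restrict_apply measurableSet_Iic]
  rcases lt_or_ge a 1 with ha | ha
  · rw [Set.inter_comm, Ioc_inter_Iic, min_eq_right ha.le, Real.volume_Ioc, sub_zero]
    exact le_antisymm (measure_cdf_preimage_Iic_le ν hν ha)
      (ofReal_le_measure_cdf_preimage_Iic ν hν ha)
  · rw [Set.inter_comm, Ioc_inter_Iic, min_eq_left ha, Real.volume_Ioc, sub_zero,
      ENNReal.ofReal_one, show cdf ν ⁻¹' Iic a = univ from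
        eq_univ_of_forall fun x => (cdf_le_one ν x).trans ha, measure_univ]

end ProbabilityIntegralTransform

section Rank

variable {ι : Type*} [Fintype ι] (ν : Measure ℝ) [IsProbabilityMeasure ν]

lemma measurable_card_filter_le : Measurable fun p : ℝ × (ι → ℝ) => #{i | p.2 i ≤ p.1} := by
  simp only [card_filter]
  exact Finset.measurable_sum _ fun i _ => Measurable.ite
    (measurableSet_le ((measurable_pi_apply i).comp measurable_snd) measurable_fst)
    measurable_const measurable_const

theorem prod_pi_card_filter_le_eq (hν : Continuous (cdf ν)) {j : ℕ} (hj : j ≤ Fintype.card ι) :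
    (ν.prod (Measure.pi fun _ : ι => ν)) {p | #{i | p.2 i ≤ p.1} = j} =
      ((Fintype.card ι : ℝ≥0∞) + 1)⁻¹ := by
  set n := Fintype.card ι
  set g : ℝ → ℝ≥0∞ := fun u => ENNReal.ofReal (u ^ j * (1 - u) ^ (n - j))
  have hg : Measurable g := by fun_prop
  have hslice : ∀ s, Measure.pi (fun _ : ι => ν) {v | #{i | v i ≤ s} = j} =
      n.choose j * g (cdf ν s) := by
    intro s
    have := pi_card_filter_mem_eq (ι := ι) ν (measurableSet_Iic (a := s)) j
    simp only [Set.mem_Iic] at this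
    rw [this, prob_compl_eq_one_sub measurableSet_Iic, ← ofReal_cdf, ← ENNReal.ofReal_one,
      ← ENNReal.ofReal_sub _ (cdf_nonneg ν s), ← ENNReal.ofReal_pow (cdf_nonneg ν s),
      ← ENNReal.ofReal_pow (sub_nonneg.2 (cdf_le_one ν s)), mul_assoc,
      ← ENNReal.ofReal_mul (pow_nonneg (cdf_nonneg ν s) _)]
  have hmeas : MeasurableSet {p : ℝ × (ι → ℝ) | #{i | p.2 i ≤ p.1} = j} :=
    measurable_card_filter_le (measurableSet_singleton j)
  rw [Measure.prod_apply hmeas]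
  calc ∫⁻ s, Measure.pi (fun _ : ι => ν) (Prod.mk s ⁻¹' {p | #{i | p.2 i ≤ p.1} = j}) ∂ν
      = ∫⁻ s, n.choose j * g (cdf ν s) ∂ν := lintegral_congr hslice
    _ = n.choose j * ∫⁻ u, g u ∂(ν.map (cdf ν)) := by
      rw [lintegral_map hg hν.measurable, lintegral_const_mul' _ _ (ENNReal.natCast_ne_top _)]
    _ = n.choose j * ∫⁻ u in Ioo 0 1, g u := by
      rw [map_cdf_eq_restrict_Ioc ν hν, Measure.restrict_congr_set Ioo_ae_eq_Ioc]
    _ = ((n : ℝ≥0∞) + 1)⁻¹ := choose_mul_lintegral_Ioo_pow_mul_one_sub_pow hj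

theorem prod_pi_card_filter_le_lt_le (hν : Continuous (cdf ν)) (k : ℕ) :
    (ν.prod (Measure.pi fun _ : ι => ν)) {p | #{i | p.2 i ≤ p.1} < k} ≤
      k / ((Fintype.card ι : ℝ≥0∞) + 1) := by
  have hset : {p : ℝ × (ι → ℝ) | #{i | p.2 i ≤ p.1} < k} =
      (fun p : ℝ × (ι → ℝ) => #{i | p.2 i ≤ p.1}) ⁻¹' ↑(range k) := by
    ext p; simp
  rw [hset, ← sum_measure_preimage_singleton _ fun j _ =>
    measurable_card_filter_le (measurableSet_singleton j), div_eq_mul_inv]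
  calc ∑ j ∈ range k, (ν.prod (Measure.pi fun _ : ι => ν)) {p | #{i | p.2 i ≤ p.1} = j}
      ≤ ∑ _j ∈ range k, ((Fintype.card ι : ℝ≥0∞) + 1)⁻¹ := by
        refine sum_le_sum fun j _ => ?_
        rcases le_or_gt j (Fintype.card ι) with hj | hj
        · exact (prod_pi_card_filter_le_eq ν hν hj).le
        · have hempty : {p : ℝ × (ι → ℝ) | #{i | p.2 i ≤ p.1} = j} = ∅ :=
            eq_empty_of_forall_notMem fun p (hp : _ = j) => hj.not_ge (hp ▸ card_le_univ _)
          simp [hempty]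
    _ = k * ((Fintype.card ι : ℝ≥0∞) + 1)⁻¹ := by rw [sum_const, card_range, nsmul_eq_mul]

end Rank

theorem map_prodMk_pi_eq_prod_pi {Ω α ι : Type*} [MeasurableSpace Ω] [MeasurableSpace α]
    [Fintype ι] {P : Measure Ω} [IsFiniteMeasure P] {Y : Ω → α} {Ys : ι → Ω → α}
    (hY : Measurable Y) (hYs : ∀ i, Measurable (Ys i)) (hident : ∀ i, P.map (Ys i) = P.map Y)
    (hiid : iIndepFun Ys P) (hindep : IndepFun Y (fun ω i => Ys i ω) P) :
    P.map (fun ω => (Y ω, fun i => Ys i ω)) =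
      (P.map Y).prod (Measure.pi fun _ : ι => P.map Y) := by
  rw [(indepFun_iff_map_prod_eq_prod_map_map hY.aemeasurable
      (measurable_pi_lambda _ hYs).aemeasurable).1 hindep,
    hiid.map_fun_eq_pi_map fun i => (hYs i).aemeasurable]
  simp_rw [hident]

theorem measure_card_filter_le_lt_le {Ω ι : Type*} [MeasurableSpace Ω] [Fintype ι]
    {P : Measure Ω} [IsProbabilityMeasure P] {Y : Ω → ℝ} {Ys : ι → Ω → ℝ}
    (hY : Measurable Y) (hYs : ∀ i, Measurable (Ys i)) (hident : ∀ i, P.map (Ys i) = P.map Y)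
    (hiid : iIndepFun Ys P) (hindep : IndepFun Y (fun ω i => Ys i ω) P)
    (hcont : Continuous (cdf (P.map Y))) (k : ℕ) :
    P {ω | #{i | Ys i ω ≤ Y ω} < k} ≤ k / ((Fintype.card ι : ℝ≥0∞) + 1) := by
  have : IsProbabilityMeasure (P.map Y) := Measure.isProbabilityMeasure_map hY.aemeasurable
  have hA : MeasurableSet {p : ℝ × (ι → ℝ) | #{i | p.2 i ≤ p.1} < k} :=
    measurable_card_filter_le measurableSet_Iio
  calc P {ω | #{i | Ys i ω ≤ Y ω} < k}
      = P.map (fun ω => (Y ω, fun i => Ys i ω)) {p | #{i | p.2 i ≤ p.1} < k} :=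
        (Measure.map_apply (hY.prodMk (measurable_pi_lambda _ hYs)) hA).symm
    _ ≤ k / ((Fintype.card ι : ℝ≥0∞) + 1) := by
      rw [map_prodMk_pi_eq_prod_pi hY hYs hident hiid hindep]
      exact prod_pi_card_filter_le_lt_le _ hcont k

lemma one_div_mul_sum_ite_le_lt_iff {N : ℕ} (hN : 0 < N) (v : Fin N → ℝ) (s a : ℝ) :
    1 / (N : ℝ) * ∑ i, (if v i ≤ s then 1 else 0) < a ↔ #{i | v i ≤ s} < ⌈N * a⌉₊ := by
  rw [sum_boole, one_div_mul_eq_div, div_lt_iff₀' (Nat.cast_pos.2 hN), Nat.lt_ceil]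

lemma ceil_mul_one_sub_div_le {N : ℕ} {ε ε' : ℝ} (hε' : ε' < 1) (h : ε ≤ N * (ε' - ε)) :
    (⌈N * (1 - ε')⌉₊ : ℝ) / (N + 1) ≤ 1 - ε := by
  have hceil := Nat.ceil_lt_add_one (mul_nonneg (Nat.cast_nonneg N) (sub_nonneg.2 hε'.le))
  rw [div_le_iff₀ (by positivity)]
  linarith

lemma le_natCast_mul_div_sqrt {N : ℕ} (hN : 0 < N) {ε C : ℝ} (hε : ε ≤ 1) (hC : 1 ≤ C) :
    ε ≤ N * (C / √(N : ℝ)) := by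
  have hN1 : 1 ≤ √(N : ℝ) := Real.one_le_sqrt.2 (Nat.one_le_cast.2 hN)
  rw [← mul_div_assoc, mul_div_right_comm, Real.div_sqrt]
  nlinarith

/-- `none` encodes the reject symbol `ℜ`. -/
theorem eero_inflated_rate_budget_control
    {Ω : Type*} [MeasurableSpace Ω] (P : Measure Ω) [IsProbabilityMeasure P]
    {d K : ℕ}
    (X : Ω → (Fin d → ℝ)) (hX : Measurable X)
    (shat : (Fin d → ℝ) → ℝ) (hshat : Measurable shat)
    (F : ℝ → ℝ) (hF : ∀ t, F t = (P {ω | shat (X ω) ≤ t}).toReal) (hFcont : Continuous F)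
    (N : ℕ) (hN : 0 < N) (Xs : Fin N → Ω → (Fin d → ℝ)) (hXs : ∀ i, Measurable (Xs i))
    (hident : ∀ i, Measure.map (Xs i) P = Measure.map X P)
    (hiid : iIndepFun Xs P)
    (hindep : IndepFun X (fun ω i => Xs i ω) P)
    (Fhat : Ω → ℝ → ℝ)
    (hFhat : ∀ ω t, Fhat ω t = (1 / (N : ℝ)) * ∑ i : Fin N, if shat (Xs i ω) ≤ t then 1 else 0)
    (ghat : (Fin d → ℝ) → Fin K)
    (C : ℝ) (hC : C = 2 * Real.sqrt (Real.pi / 2))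
    (ε : ℝ) (hε : ε ∈ Set.Ioo (0 : ℝ) 1) (hsmall : ε + C / Real.sqrt N < 1)
    (εtilde : ℝ) (hεtilde : εtilde = ε + C / Real.sqrt N)
    (hhat : Ω → (Fin d → ℝ) → Option (Fin K))
    (hhatdef : ∀ ω x, hhat ω x = if Fhat ω (shat x) < 1 - εtilde then none else some (ghat x)) :
    (P {ω | hhat ω (X ω) = none}).toReal ≤ 1 - ε := by
  set S : Ω → ℝ := fun ω => shat (X ω)
  have hS : Measurable S := hshat.comp hX
  have hcont : Continuous (cdf (P.map S)) := by
    have : IsProbabilityMeasure (P.map S) := Measure.isProbabilityMeasure_map hS.aemeasurable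
    convert hFcont using 1
    ext t
    rw [cdf_eq_real, measureReal_def, hF, Measure.map_apply hS measurableSet_Iic]
    rfl
  set r := (N : ℝ) * (1 - εtilde)
  have hreject : {ω | hhat ω (X ω) = none} = {ω | #{i | shat (Xs i ω) ≤ S ω} < ⌈r⌉₊} := by
    ext ω
    simp only [Set.mem_ofPred_eq, hhatdef, hFhat, one_div_mul_sum_ite_le_lt_iff hN]
    simp only [ite_eq_left_iff, reduceCtorEq, imp_false, not_not]
    rfl
  have hbound : P {ω | hhat ω (X ω) = none} ≤ ⌈r⌉₊ / ((N : ℝ≥0∞) + 1) := by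
    have h := measure_card_filter_le_lt_le hS (fun i => hshat.comp (hXs i))
      (fun i => by rw [← Measure.map_map hshat (hXs i), hident i, Measure.map_map hshat hX]; rfl)
      (hiid.comp (fun _ => shat) fun _ => hshat)
      (hindep.comp hshat (measurable_pi_lambda _ fun i => hshat.comp (measurable_pi_apply i)))
      hcont ⌈r⌉₊
    rw [hreject]
    rwa [Fintype.card_fin] at h
  have hslack : ε ≤ N * (εtilde - ε) := by
    rw [hεtilde, add_sub_cancel_left]
    refine le_natCast_mul_div_sqrt hN hε.2.le ?_
    have : 1 ≤ √(Real.pi / 2) := Real.one_le_sqrt.2 (by linarith [Real.two_le_pi])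
    linarith
  calc (P {ω | hhat ω (X ω) = none}).toReal ≤ (⌈r⌉₊ / ((N : ℝ≥0∞) + 1)).toReal :=
        ENNReal.toReal_mono (ENNReal.div_ne_top (ENNReal.natCast_ne_top _) (by positivity)) hbound
    _ = ⌈r⌉₊ / ((N : ℝ) + 1) := by simp [ENNReal.toReal_div, ENNReal.toReal_add]
    _ ≤ 1 - ε := ceil_mul_one_sub_div_le (hεtilde ▸ hsmall) hslack
end

section
/- Let Z be a real random variable whose CDF F is continuous, and let G : ℝ → ℝ be any function with δ = sup_{t∈ℝ} |G(t) − F(t)| < ∞. Then for every u ∈ [0,1], |P(G(Z) ≤ u) − u| ≤ 2δ. In particular, with Z = ŝ(X), F the CDF of ŝ(X) and G = F̂ a deterministic approximation of F, the rejection probability of the rule that rejects when F̂(ŝ(X)) ≤ 1−ε deviates from 1−ε by at most 2‖F̂ − F‖_∞. -/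
/-!
For a continuous CDF `F`, the probability integral transform `F(Z)` is uniform on `[0,1]`:
`ℙ(F(Z) ≤ v) ≤ v` for `v ≥ 0` because `{F ≤ v}` is a closed half-line `(-∞, s]` with `F s ≤ v`,
and `ℙ(F(Z) ≤ v) ≥ v` for `v ≤ 1` because, by the intermediate value theorem, `v = F t` for some `t`
and then `{Z ≤ t} ⊆ {F(Z) ≤ v}`. Since `|G − F| ≤ δ`, the event `{G(Z) ≤ u}` lies between
`{F(Z) ≤ u − δ}` and `{F(Z) ≤ u + δ}`, so its probability is within `δ` of `u`.
-/

open MeasureTheory ProbabilityTheory Filter Set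

namespace ProbabilityTheory

variable (μ : Measure ℝ) [IsProbabilityMeasure μ]

lemma measureReal_cdf_le_le (hcont : Continuous (cdf μ)) {v : ℝ} (hv : 0 ≤ v) :
    μ.real {x | cdf μ x ≤ v} ≤ v := by
  rcases le_or_gt 1 v with h1v | hv1
  · exact measureReal_le_one.trans h1v
  set A := {x | cdf μ x ≤ v}
  rcases A.eq_empty_or_nonempty with hempty | hne
  · simpa [hempty] using hv
  obtain ⟨b, hb⟩ := ((tendsto_cdf_atTop μ).eventually (eventually_gt_nhds hv1)).exists
  have hbdd : BddAbove A := ⟨b, fun x hx => le_of_lt <|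
    (monotone_cdf μ).reflect_lt (lt_of_le_of_lt hx hb)⟩
  have hsup : sSup A ∈ A := (isClosed_le hcont continuous_const).csSup_mem hne hbdd
  calc μ.real A ≤ μ.real (Iic (sSup A)) := measureReal_mono fun x hx => le_csSup hbdd hx
    _ = cdf μ (sSup A) := (cdf_eq_real μ _).symm
    _ ≤ v := hsup

lemma le_measureReal_cdf_le (hcont : Continuous (cdf μ)) {v : ℝ} (hv : v ≤ 1) :
    v ≤ μ.real {x | cdf μ x ≤ v} := by
  rcases le_or_gt v 0 with hv0 | hv0
  · exact hv0.trans measureReal_nonneg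
  by_cases hreach : ∃ b, v ≤ cdf μ b
  · have hbelow : ∃ a, cdf μ a ≤ v :=
      ((tendsto_cdf_atBot μ).eventually (eventually_le_nhds hv0)).exists
    obtain ⟨t, ht⟩ := mem_range_of_exists_le_of_exists_ge hcont hbelow hreach
    calc v = μ.real (Iic t) := ht ▸ cdf_eq_real μ t
      _ ≤ μ.real {x | cdf μ x ≤ v} := measureReal_mono fun x hx => ht ▸ monotone_cdf μ hx
  · simp only [not_exists, not_le] at hreach
    have huniv : {x | cdf μ x ≤ v} = univ := eq_univ_of_forall fun x => (hreach x).le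
    simpa [huniv] using hv

end ProbabilityTheory

/-- If `Z` has a continuous CDF `F` and `G` is any function with
`sup_t |G(t) − F(t)| ≤ δ`, then for every `u ∈ [0,1]`, `|ℙ(G(Z) ≤ u) − u| ≤ 2δ`.
This is the key deviation inequality behind the rejection-rate control. -/
theorem cdf_perturbation_deviation
    {Ω : Type*} [MeasurableSpace Ω] (P : Measure Ω) [IsProbabilityMeasure P]
    (Z : Ω → ℝ) (hZ : Measurable Z)
    (F : ℝ → ℝ) (hF : ∀ t, F t = (P {ω | Z ω ≤ t}).toReal) (hFcont : Continuous F)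
    (G : ℝ → ℝ) (δ : ℝ) (hδ : ∀ t, |G t - F t| ≤ δ) :
    ∀ u ∈ Set.Icc (0 : ℝ) 1, |(P {ω | G (Z ω) ≤ u}).toReal - u| ≤ 2 * δ := by
  rintro u ⟨hu0, hu1⟩
  have hδ0 : 0 ≤ δ := (abs_nonneg _).trans (hδ 0)
  have : IsProbabilityMeasure (P.map Z) := Measure.isProbabilityMeasure_map hZ.aemeasurable
  have hFcdf : F = cdf (P.map Z) := funext fun t => by
    rw [hF, cdf_eq_real, map_measureReal_apply hZ measurableSet_Iic]; rfl
  have hevent : ∀ v, P.real {ω | F (Z ω) ≤ v} = (P.map Z).real {x | cdf (P.map Z) x ≤ v} :=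
    fun v => by
      rw [map_measureReal_apply hZ (measurableSet_le (hFcdf ▸ hFcont.measurable) measurable_const),
        ← hFcdf]; rfl
  have hclose : ∀ t, F t - δ ≤ G t ∧ G t ≤ F t + δ := fun t => by
    constructor <;> linarith [abs_le.mp (hδ t)]
  have hupper : P.real {ω | G (Z ω) ≤ u} ≤ u + δ := calc
    _ ≤ P.real {ω | F (Z ω) ≤ u + δ} :=
      measureReal_mono fun ω (hω : G (Z ω) ≤ u) =>
        show F (Z ω) ≤ u + δ by linarith [(hclose (Z ω)).1]
    _ ≤ u + δ := hevent _ ▸ measureReal_cdf_le_le _ (hFcdf ▸ hFcont) (by linarith)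
  have hlower : u - δ ≤ P.real {ω | G (Z ω) ≤ u} := calc
    _ ≤ P.real {ω | F (Z ω) ≤ u - δ} :=
      hevent _ ▸ le_measureReal_cdf_le _ (hFcdf ▸ hFcont) (by linarith)
    _ ≤ _ := measureReal_mono fun ω (hω : F (Z ω) ≤ u - δ) =>
      show G (Z ω) ≤ u by linarith [(hclose (Z ω)).2]
  rw [← measureReal_def, abs_le]
  constructor <;> linarith
end
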